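/- For any two cardinals s and n with 1 < s ≤ n and n infinite, there exists a group G of cardinality s + n = n and an equation u(x)=1 over G such that exactly s elements of G are solutions and exactly n elements are non-solutions. -/

import Mathlib

/-!
Let `A` be a group of cardinality `s` with finite exponent `k` (cyclic of order `s` when `s` is
finite, an `𝔽₂`-vector space of dimension `s` otherwise), and let `F` be the free group on `n`
generators, which is torsion-free. In `A × F` the solutions of `x ^ k = 1` are exactly `A × {1}`,
of cardinality `s`, while the non-solutions number `s * n = n`.
-/

def evalWord {G : Type*} [Group G] (w : List (G ⊕ ℤ)) (g : G) : G :=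
  (w.map (Sum.elim id (fun k => g ^ k))).prod

universe u

open Cardinal

@[simp]
lemma evalWord_singleton_inr {G : Type*} [Group G] (k : ℤ) (g : G) :
    evalWord [Sum.inr k] g = g ^ k := by
  simp [evalWord]

lemma Prod.pow_eq_one_iff_snd {A C : Type*} [Monoid A] [Monoid C] [IsMulTorsionFree C]
    {k : ℕ} (hk : k ≠ 0) (hA : ∀ a : A, a ^ k = 1) {g : A × C} :
    g ^ k = 1 ↔ g.2 = 1 := by
  simp [Prod.ext_iff, hA, hk]

lemma Cardinal.mk_preimage_snd {α β : Type u} (t : Set β) :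
    #(Prod.snd ⁻¹' t : Set (α × β)) = #α * #t := by
  rw [← Set.univ_prod, mk_congr (Equiv.Set.prod _ _), mk_prod, lift_id, lift_id, mk_univ]

lemma Cardinal.exists_group_exponentExists_mk_eq {s : Cardinal.{u}} (hs : s ≠ 0) :
    ∃ (A : Type u) (_ : Group A), Monoid.ExponentExists A ∧ #A = s := by
  rcases lt_or_ge s ℵ₀ with hfin | hinf
  · obtain ⟨m, rfl⟩ := lt_aleph0.mp hfin
    have : NeZero m := ⟨by exact_mod_cast hs⟩
    exact ⟨Multiplicative (ULift.{u} (ZMod m)), inferInstance, .of_finite, by simp⟩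
  · have : Infinite s.out := infinite_iff.mpr (by rwa [mk_out])
    refine ⟨Multiplicative (s.out →₀ ZMod 2), inferInstance, ⟨2, two_pos, fun g => ?_⟩,
      by simp [ofNat_le_aleph0.trans hinf]⟩
    apply Multiplicative.toAdd.injective
    ext i
    simp [two_nsmul, ZModModule.add_self]

theorem exists_equation_of_exponentExists {A : Type u} [Group A]
    (hA : Monoid.ExponentExists A) {n : Cardinal.{u}} (hAn : #A ≤ n) (hn : ℵ₀ ≤ n) :
    ∃ (G : Type u) (_ : Group G) (w : List (G ⊕ ℤ)),
      #G = n ∧ #{g : G | evalWord w g = 1} = #A ∧ #{g : G | evalWord w g ≠ 1} = n := by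
  have : Infinite n.out := infinite_iff.mpr (by rwa [mk_out])
  have hF : #(FreeGroup n.out) = n := by rw [mk_freeGroup, mk_out, max_eq_left hn]
  have hAn' : #A * n = n := mul_eq_right hn hAn (mk_ne_zero A)
  have hsol (g : A × FreeGroup n.out) :
      evalWord [Sum.inr (Monoid.exponent A : ℤ)] g = 1 ↔ g.2 = 1 := by
    rw [evalWord_singleton_inr, zpow_natCast]
    exact Prod.pow_eq_one_iff_snd (Monoid.exponent_ne_zero.mpr hA) Monoid.pow_exponent_eq_one
  refine ⟨A × FreeGroup n.out, inferInstance, [Sum.inr (Monoid.exponent A : ℤ)], ?_, ?_, ?_⟩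
  · rw [mk_prod, lift_id, lift_id, hF, hAn']
  · simp only [hsol]
    exact (mk_preimage_snd {1}).trans (by simp)
  · simp only [ne_eq, hsol]
    refine (mk_preimage_snd {1}ᶜ).trans ?_
    rw [mk_compl_of_infinite _ (by rw [mk_singleton, hF]; exact one_lt_aleph0.trans_le hn), hF,
      hAn']

/-- For cardinals `1 < s ≤ n` with `n` infinite, there is a group of
cardinality `n` and an equation over it with exactly `s` solutions and exactly
`n` non-solutions. -/
theorem stmt12 (s n : Cardinal.{u}) (hs : 1 < s) (hsn : s ≤ n)
    (hn : Cardinal.aleph0 ≤ n) :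
    ∃ (G : Type u) (inst : Group G) (w : List (G ⊕ ℤ)),
      Cardinal.mk G = n ∧
      Cardinal.mk {g : G | @evalWord G inst w g = 1} = s ∧
      Cardinal.mk {g : G | @evalWord G inst w g ≠ 1} = n := by
  obtain ⟨A, _, hA, rfl⟩ := exists_group_exponentExists_mk_eq (zero_lt_one.trans hs).ne'
  exact exists_equation_of_exponentExists hA hsn hn
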